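/- arXiv:2301.10578 — 5 statements merged into one kernel-verified Lean document; each statement's English description precedes it below -/
import Mathlib

section
/- There exist infinitely many bipartite 2-connected simple graphs G with spc(G) ≥ 4; that is, for every natural number n there is a bipartite 2-connected simple graph G with more than n vertices such that no edge coloring of G with 3 colors is strongly proper connected. -/
open SimpleGraph

/-- A list of colors is *strongly proper* if any two of its terms at distance
at most 2 are distinct. -/
def StronglyProperSeq {α : Type*} (l : List α) : Prop :=
  ∀ i j : ℕ, i < j → j ≤ i + 2 → ∀ (hi : i < l.length) (hj : j < l.length),
    l.get ⟨i, hi⟩ ≠ l.get ⟨j, hj⟩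

/-- An edge coloring of `G` is strongly proper connected if every pair of distinct
vertices is joined by a path whose sequence of edge colors is strongly proper. -/
def IsStronglyProperConnected {V : Type*} (G : SimpleGraph V) {β : Type*}
    (c : Sym2 V → β) : Prop :=
  ∀ u v : V, u ≠ v → ∃ p : G.Walk u v, p.IsPath ∧ StronglyProperSeq (p.edges.map c)

/-- `G` is `k`-connected: it has more than `k` vertices and deleting any set of
fewer than `k` vertices leaves a connected graph. -/
def KConnected {V : Type*} (k : ℕ) (G : SimpleGraph V) : Prop :=
  k < Nat.card V ∧
    ∀ S : Set V, S.Finite → S.ncard < k → (G.induce Sᶜ).Connected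

/-- `G` is bipartite: its vertex set is partitioned into two independent sets. -/
def Bipartite {V : Type*} (G : SimpleGraph V) : Prop :=
  ∃ W : Set V, (∀ u v, u ∈ W → v ∈ W → ¬ G.Adj u v) ∧
    (∀ u v, u ∉ W → v ∉ W → ¬ G.Adj u v)

/-! The witnesses are theta graphs: two hubs `U`, `V` joined by `k` internally disjoint paths
`U - X i - Y i - Z i - V`; they are bipartite and 2-connected. With at most three colors, any three
consecutive terms of a strongly proper color sequence are all the colors, so the sequence is
3-periodic. Once `k > 81`, two branches `i ≠ j` carry the same colors `(a, b, c, d)` from `U` to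
`V`. A path from `X i` to `X j` is neither `X i U X j` (colors `a a`) nor `X i Y i Z i V Z j Y j X j`
(colors `… d d …`), so it runs through a third branch, and periodicity forces `c = a` and `b ≠ d`.
The same argument for a path from `Z i` to `Z j`, transported by the symmetry exchanging `U, X`
with `V, Z`, forces `b = d`. -/

namespace StronglyProperSeq

variable {α : Type*} {l : List α}

theorem getElem_ne (h : StronglyProperSeq l) {i j : ℕ} (hij : i < j) (hji : j ≤ i + 2)
    (hj : j < l.length) : l[i] ≠ l[j] :=
  h i j hij hji (by omega) hj

theorem getElem_add_three [Fintype α] (hα : Fintype.card α ≤ 3) (h : StronglyProperSeq l)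
    (n : ℕ) (hn : n + 3 < l.length) : l[n] = l[n + 3] := by
  by_contra hne
  have hnd : [l[n], l[n + 1], l[n + 2], l[n + 3]].Nodup := by
    simp [hne, h.getElem_ne]
  have := hnd.length_le_card
  simp only [List.length_cons, List.length_nil] at this
  omega

end StronglyProperSeq

namespace SimpleGraph

variable {V : Type*} {G : SimpleGraph V}

theorem Walk.IsPath.exists_eq_cons {u v : V} {p : G.Walk u v} (hp : p.IsPath) (huv : u ≠ v) :
    ∃ w, ∃ (h : G.Adj u w) (q : G.Walk w v), p = .cons h q ∧ q.IsPath ∧ u ∉ q.support := by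
  obtain ⟨w, h, q, rfl⟩ := Walk.exists_eq_cons_of_ne huv p
  exact ⟨w, h, q, rfl, (Walk.cons_isPath_iff h q).1 hp⟩

theorem Walk.IsPath.eq_nil {u : V} {p : G.Walk u u} (hp : p.IsPath) : p = .nil :=
  Walk.eq_nil_iff_nil.2 (Walk.isPath_iff_nil.1 hp)

theorem induce_connected_of_forall_walk {T : Set V} {u : V} (hu : u ∈ T)
    (h : ∀ x ∈ T, ∃ p : G.Walk x u, ∀ y ∈ p.support, y ∈ T) : (G.induce T).Connected := by
  rw [connected_iff_exists_forall_reachable]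
  refine ⟨⟨u, hu⟩, fun ⟨x, hx⟩ => ?_⟩
  obtain ⟨p, hp⟩ := h x hx
  exact ⟨(p.induce T hp).reverse⟩

end SimpleGraph

namespace Theta

inductive Vtx (k : ℕ) : Type
  | U
  | V
  | X (i : Fin k)
  | Y (i : Fin k)
  | Z (i : Fin k)
  deriving DecidableEq, Fintype

open Vtx

variable {k : ℕ}

def thetaAdj : Vtx k → Vtx k → Prop
  | U, X _ | X _, U | Z _, V | V, Z _ => True
  | X i, Y j | Y i, X j | Y i, Z j | Z i, Y j => i = j
  | _, _ => False

def theta (k : ℕ) : SimpleGraph (Vtx k) where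
  Adj := thetaAdj
  symm := ⟨fun a b h => by cases a <;> cases b <;> simp_all [thetaAdj]⟩
  loopless := ⟨fun a h => by cases a <;> simp_all [thetaAdj]⟩

@[simp] lemma theta_adj_U {w : Vtx k} : (theta k).Adj U w ↔ ∃ i, w = X i := by
  cases w <;> simp [theta, thetaAdj]

@[simp] lemma theta_adj_V {w : Vtx k} : (theta k).Adj V w ↔ ∃ i, w = Z i := by
  cases w <;> simp [theta, thetaAdj]

@[simp] lemma theta_adj_X {i : Fin k} {w : Vtx k} : (theta k).Adj (X i) w ↔ w = U ∨ w = Y i := by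
  cases w <;> simp [theta, thetaAdj, eq_comm]

@[simp] lemma theta_adj_Y {i : Fin k} {w : Vtx k} :
    (theta k).Adj (Y i) w ↔ w = X i ∨ w = Z i := by
  cases w <;> simp [theta, thetaAdj, eq_comm]

@[simp] lemma theta_adj_Z {i : Fin k} {w : Vtx k} : (theta k).Adj (Z i) w ↔ w = Y i ∨ w = V := by
  cases w <;> simp [theta, thetaAdj, eq_comm]

lemma add_two_le_card_vtx : k + 2 ≤ Nat.card (Vtx k) := by
  have : Function.Injective fun o : Option (Option (Fin k)) => o.elim U (Option.elim · V X) := by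
    rintro (_ | _ | _) (_ | _ | _) h <;> simp_all
  have := Nat.card_le_card_of_injective _ this
  simp only [Nat.card_eq_fintype_card, Fintype.card_option, Fintype.card_fin] at this ⊢
  omega

lemma bipartite_theta : Bipartite (theta k) := by
  refine ⟨{v | ∃ i, v = X i ∨ v = Z i}, ?_, ?_⟩ <;> intro u v hu hv <;> cases u <;> cases v <;>
    simp_all

lemma exists_branch_avoiding (hk : 2 ≤ k) (w : Vtx k) : ∃ b, X b ≠ w ∧ Y b ≠ w ∧ Z b ≠ w := by
  have : Nontrivial (Fin k) := Fin.nontrivial_iff_two_le.2 hk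
  cases w with
  | U | V => exact ⟨⟨0, by omega⟩, by simp⟩
  | X i | Y i | Z i => exact (exists_ne i).imp fun b hb => by simp [hb]

/-- Go along the branch of `x` to a hub other than `w`, then into branch `b`. -/
lemma exists_walk_avoiding {w : Vtx k} {b : Fin k} (hb : X b ≠ w ∧ Y b ≠ w ∧ Z b ≠ w)
    (x : Vtx k) : ∃ p : (theta k).Walk x (Y b), ∀ y ∈ p.support.tail, y ≠ w := by
  let viaU : (theta k).Walk U (Y b) := .cons (v := X b) (by simp) (.cons (by simp) .nil)
  let viaV : (theta k).Walk V (Y b) := .cons (v := Z b) (by simp) (.cons (by simp) .nil)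
  cases x with
  | U => exact ⟨viaU, by simp [viaU, hb]⟩
  | V => exact ⟨viaV, by simp [viaV, hb]⟩
  | X i =>
    by_cases hw : U = w
    · subst hw
      exact ⟨.cons (v := Y i) (by simp) (.cons (v := Z i) (by simp) (.cons (by simp) viaV)),
        by simp_all [viaV]⟩
    · exact ⟨.cons (by simp) viaU, by simp_all [viaU]⟩
  | Y i =>
    by_cases hw : X i ≠ w ∧ U ≠ w
    · exact ⟨.cons (v := X i) (by simp) (.cons (by simp) viaU), by simp_all [viaU]⟩
    · have : Z i ≠ w ∧ V ≠ w := by constructor <;> rintro rfl <;> simp at hw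
      exact ⟨.cons (v := Z i) (by simp) (.cons (by simp) viaV), by simp_all [viaV]⟩
  | Z i =>
    by_cases hw : V = w
    · subst hw
      exact ⟨.cons (v := Y i) (by simp) (.cons (v := X i) (by simp) (.cons (by simp) viaU)),
        by simp_all [viaU]⟩
    · exact ⟨.cons (by simp) viaV, by simp_all [viaV]⟩

theorem kConnected_two_theta (hk : 2 ≤ k) : KConnected 2 (theta k) := by
  refine ⟨by have := add_two_le_card_vtx (k := k); omega, fun S _ hS => ?_⟩
  obtain ⟨w, hw⟩ : ∃ w, S ⊆ {w} := by
    rcases (Set.ncard_le_one_iff_subsingleton (s := S)).1 (by omega) |>.eq_empty_or_singleton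
      with rfl | ⟨w, rfl⟩
    exacts [⟨U, Set.empty_subset _⟩, ⟨w, subset_rfl⟩]
  obtain ⟨b, hb⟩ := exists_branch_avoiding hk w
  refine induce_connected_of_forall_walk (u := Y b) (fun h => hb.2.1 (hw h)) fun x hx => ?_
  obtain ⟨p, hp⟩ := exists_walk_avoiding hb x
  refine ⟨p, fun y hy => ?_⟩
  rw [← p.cons_tail_support, List.mem_cons] at hy
  rcases hy with rfl | hy
  exacts [hx, fun hyS => hp y hy (hw hyS)]

variable {i j : Fin k}

lemma edges_of_isPath_V_X {p : (theta k).Walk V (X j)} (hp : p.IsPath) :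
    p.edges = [s(Z j, V), s(Y j, Z j), s(X j, Y j)] ∨
    ∃ m, p.edges = [s(Z m, V), s(Y m, Z m), s(X m, Y m), s(U, X m), s(U, X j)] := by
  obtain ⟨_, h, p, rfl, hp, hV⟩ := hp.exists_eq_cons (by simp)
  obtain ⟨m, rfl⟩ := theta_adj_V.1 h
  obtain ⟨_, h, p, rfl, hp, hZ⟩ := hp.exists_eq_cons (by simp)
  obtain rfl := (theta_adj_Z.1 h).resolve_right (by rintro rfl; simp at hV)
  obtain ⟨_, h, p, rfl, hp, hY⟩ := hp.exists_eq_cons (by simp)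
  obtain rfl := (theta_adj_Y.1 h).resolve_right (by rintro rfl; simp at hZ)
  by_cases hmj : m = j
  · subst hmj
    obtain rfl := hp.eq_nil
    simp [Sym2.eq_swap]
  obtain ⟨_, h, p, rfl, hp, hX⟩ := hp.exists_eq_cons (by simpa)
  obtain rfl := (theta_adj_X.1 h).resolve_right (by rintro rfl; simp at hY)
  obtain ⟨_, h, p, rfl, hp, hU⟩ := hp.exists_eq_cons (by simp)
  obtain ⟨l, rfl⟩ := theta_adj_U.1 h
  by_cases hlj : l = j
  · subst hlj
    obtain rfl := hp.eq_nil
    exact Or.inr ⟨m, by simp [Sym2.eq_swap]⟩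
  obtain ⟨_, h, p, rfl, hp, hX'⟩ := hp.exists_eq_cons (by simpa)
  obtain rfl := (theta_adj_X.1 h).resolve_left (by rintro rfl; simp at hU)
  obtain ⟨_, h, p, rfl, hp, hY'⟩ := hp.exists_eq_cons (by simp)
  obtain rfl := (theta_adj_Y.1 h).resolve_left (by rintro rfl; simp at hX')
  obtain ⟨_, h, p, rfl, hp, hZ'⟩ := hp.exists_eq_cons (by simp)
  obtain rfl | rfl := theta_adj_Z.1 h
  · simp at hY'
  · simp at hV

lemma edges_of_isPath_U_X {p : (theta k).Walk U (X j)} (hp : p.IsPath) :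
    p.edges = [s(U, X j)] ∨
    ∃ m, p.edges = [s(U, X m), s(X m, Y m), s(Y m, Z m), s(Z m, V), s(Z j, V), s(Y j, Z j),
      s(X j, Y j)] := by
  obtain ⟨_, h, p, rfl, hp, hU⟩ := hp.exists_eq_cons (by simp)
  obtain ⟨m, rfl⟩ := theta_adj_U.1 h
  by_cases hmj : m = j
  · subst hmj
    obtain rfl := hp.eq_nil
    simp
  obtain ⟨_, h, p, rfl, hp, hX⟩ := hp.exists_eq_cons (by simpa)
  obtain rfl := (theta_adj_X.1 h).resolve_left (by rintro rfl; simp at hU)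
  obtain ⟨_, h, p, rfl, hp, hY⟩ := hp.exists_eq_cons (by simp)
  obtain rfl := (theta_adj_Y.1 h).resolve_left (by rintro rfl; simp at hX)
  obtain ⟨_, h, p, rfl, hp, hZ⟩ := hp.exists_eq_cons (by simp)
  obtain rfl := (theta_adj_Z.1 h).resolve_left (by rintro rfl; simp at hY)
  obtain hp | ⟨l, hp⟩ := edges_of_isPath_V_X hp
  · exact Or.inr ⟨m, by simp [hp]⟩
  · have : U ∈ p.support := p.fst_mem_support_of_mem_edges (u := X l) (by simp [hp])
    simp [this] at hU

lemma edges_of_isPath_X_X (hij : i ≠ j) {p : (theta k).Walk (X i) (X j)} (hp : p.IsPath) :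
    p.edges = [s(U, X i), s(U, X j)] ∨
    p.edges = [s(X i, Y i), s(Y i, Z i), s(Z i, V), s(Z j, V), s(Y j, Z j), s(X j, Y j)] ∨
    ∃ l, p.edges = [s(U, X i), s(U, X l), s(X l, Y l), s(Y l, Z l), s(Z l, V), s(Z j, V),
        s(Y j, Z j), s(X j, Y j)] ∨
      p.edges = [s(X i, Y i), s(Y i, Z i), s(Z i, V), s(Z l, V), s(Y l, Z l), s(X l, Y l),
        s(U, X l), s(U, X j)] := by
  obtain ⟨_, h, p, rfl, hp, hX⟩ := hp.exists_eq_cons (by simpa)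
  obtain rfl | rfl := theta_adj_X.1 h
  · obtain hp | ⟨l, hp⟩ := edges_of_isPath_U_X hp
    · exact Or.inl (by simp [hp, Sym2.eq_swap])
    · exact Or.inr (Or.inr ⟨l, Or.inl (by simp [hp, Sym2.eq_swap])⟩)
  obtain ⟨_, h, p, rfl, hp, hY⟩ := hp.exists_eq_cons (by simp)
  obtain rfl := (theta_adj_Y.1 h).resolve_left (by rintro rfl; simp at hX)
  obtain ⟨_, h, p, rfl, hp, hZ⟩ := hp.exists_eq_cons (by simp)
  obtain rfl := (theta_adj_Z.1 h).resolve_left (by rintro rfl; simp at hY)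
  obtain hp | ⟨l, hp⟩ := edges_of_isPath_V_X hp
  · exact Or.inr (Or.inl (by simp [hp]))
  · exact Or.inr (Or.inr ⟨l, Or.inr (by simp [hp])⟩)

variable {α : Type*} [Fintype α]

def branchColors (c : Sym2 (Vtx k) → α) (i : Fin k) : α × α × α × α :=
  (c s(U, X i), c s(X i, Y i), c s(Y i, Z i), c s(Z i, V))

lemma colors_of_stronglyProper_path_X_X (hα : Fintype.card α ≤ 3) {c : Sym2 (Vtx k) → α}
    (hij : i ≠ j) (hc : branchColors c i = branchColors c j) {p : (theta k).Walk (X i) (X j)}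
    (hp : p.IsPath) (hsp : StronglyProperSeq (p.edges.map c)) :
    c s(Y i, Z i) = c s(U, X i) ∧ c s(X i, Y i) ≠ c s(Z i, V) := by
  obtain ⟨hA, hB, hC, hD⟩ : c s(U, X i) = c s(U, X j) ∧ c s(X i, Y i) = c s(X j, Y j) ∧
      c s(Y i, Z i) = c s(Y j, Z j) ∧ c s(Z i, V) = c s(Z j, V) := by
    simpa [branchColors] using hc
  rcases edges_of_isPath_X_X hij hp with he | he | ⟨l, he | he⟩ <;>
    simp only [he, List.map_cons, List.map_nil] at hsp
  · exact absurd hA (by simpa using hsp.getElem_ne (i := 0) (j := 1) (by simp) (by simp) (by simp))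
  · exact absurd hD (by simpa using hsp.getElem_ne (i := 2) (j := 3) (by simp) (by simp) (by simp))
  · have h03 := hsp.getElem_add_three hα 0 (by simp)
    have h36 := hsp.getElem_add_three hα 3 (by simp)
    have h57 := hsp.getElem_ne (i := 5) (j := 7) (by simp) (by simp) (by simp)
    simp only [List.getElem_cons_succ, List.getElem_cons_zero] at h03 h36 h57
    exact ⟨hC.trans (h03.trans h36).symm, hB ▸ hD ▸ fun h => h57 h.symm⟩
  · have h14 := hsp.getElem_add_three hα 1 (by simp)
    have h47 := hsp.getElem_add_three hα 4 (by simp)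
    have h02 := hsp.getElem_ne (i := 0) (j := 2) (by simp) (by simp) (by simp)
    simp only [List.getElem_cons_succ, List.getElem_cons_zero] at h14 h47 h02
    exact ⟨(h14.trans h47).trans hA.symm, h02⟩

def reflect : Vtx k → Vtx k
  | U => V
  | V => U
  | X i => Z i
  | Y i => Y i
  | Z i => X i

lemma reflect_involutive : Function.Involutive (reflect (k := k)) := by
  intro v; cases v <;> rfl

def reflectHom : theta k →g theta k where
  toFun := reflect
  map_rel' {a b} h := by cases a <;> cases b <;> simp_all [reflect]

theorem not_isStronglyProperConnected_theta (hα : Fintype.card α ≤ 3)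
    (hk : Fintype.card α ^ 4 < k) (c : Sym2 (Vtx k) → α) :
    ¬ IsStronglyProperConnected (theta k) c := by
  intro hc
  obtain ⟨i, j, hij, hbranch⟩ := Fintype.exists_ne_map_eq_of_card_lt (branchColors c)
    (by simpa [pow_succ, mul_assoc] using hk)
  obtain ⟨p, hp, hsp⟩ := hc (X i) (X j) (by simpa)
  obtain ⟨q, hq, hsq⟩ := hc (Z i) (Z j) (by simpa)
  let c' := fun e => c (Sym2.map reflect e)
  have hbranch' : branchColors c' i = branchColors c' j := by
    simp_all [branchColors, c', reflect, Sym2.eq_swap]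
  have hsq' : StronglyProperSeq ((q.map reflectHom).edges.map c') := by
    simpa [Walk.edges_map, c', reflectHom, Function.comp_def, Sym2.map_map,
      reflect_involutive _] using hsq
  have hX := colors_of_stronglyProper_path_X_X hα hij hbranch hp hsp
  have hZ := colors_of_stronglyProper_path_X_X hα hij hbranch'
    (hq.map reflect_involutive.injective) hsq'
  exact hX.2 (by simpa [c', reflect, Sym2.eq_swap] using hZ.1)

end Theta

/-- There are infinitely many bipartite 2-connected graphs `G` with `spc(G) ≥ 4`:
for every `n` there is one with more than `n` vertices for which no edge coloring
with 3 colors is strongly proper connected. -/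
theorem infinitely_many_bipartite_two_connected_spc_ge_four (n : ℕ) :
    ∃ (V : Type) (G : SimpleGraph V), Bipartite G ∧ KConnected 2 G ∧
      n < Nat.card V ∧
      ¬ ∃ c : Sym2 V → Fin 3, IsStronglyProperConnected G c := by
  refine ⟨Theta.Vtx (n + 82), Theta.theta _, Theta.bipartite_theta,
    Theta.kConnected_two_theta (by omega), ?_, ?_⟩
  · have := Theta.add_two_le_card_vtx (k := n + 82)
    omega
  · rintro ⟨c, hc⟩
    exact Theta.not_isStronglyProperConnected_theta (by simp) (by simp) c hc
end

section
/- Let G be a 2-connected simple graph in which the length of every cycle is divisible by 3. Then spc(G) ≤ 3; that is, there exists an edge coloring of G with at most 3 colors such that every pair of distinct vertices of G is joined by a strongly proper path. -/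
open SimpleGraph

/-!
Label the vertices by `f : V → ZMod 3` and colour every edge by the sum of the labels of its
ends. Along a walk on which the label increases by one at each step, consecutive colours
increase by two, so any three consecutive edges receive distinct colours. It therefore suffices
to find a labelling for which any two vertices are joined by such an ascending walk. This is
built along an ear decomposition: a new ear closes a cycle together with an ascending path
through the part already built, and since that cycle has length divisible by 3, the ear,
traversed in the right direction, can be labelled ascendingly without changing the old labels.
-/

theorem stronglyProperSeq_of_getElem_eq {l : List (ZMod 3)} (a : ZMod 3)
    (h : ∀ k (hk : k < l.length), l[k] = a + 2 * k) : StronglyProperSeq l := by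
  intro i j hij hji hi hj heq
  simp only [List.get_eq_getElem, h] at heq
  obtain ⟨d, rfl⟩ := Nat.exists_eq_add_of_lt hij
  have hd : d = 0 ∨ d = 1 := by omega
  push_cast at heq
  rcases hd with rfl | rfl
  · exact absurd (by linear_combination -heq : (2 : ZMod 3) = 0) (by decide)
  · exact absurd (by linear_combination -heq : (4 : ZMod 3) = 0) (by decide)

namespace SimpleGraph

variable {V : Type*} {G : SimpleGraph V}

namespace Walk

theorem IsPath.append {u v w : V} {p : G.Walk u v} {q : G.Walk v w} (hp : p.IsPath)
    (hq : q.IsPath) (hpq : ∀ z ∈ p.support, z ∈ q.support → z = v) : (p.append q).IsPath := by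
  have hq' := hq.support_nodup
  rw [← q.cons_tail_support, List.nodup_cons] at hq'
  rw [isPath_def, support_append]
  refine hp.support_nodup.append hq'.2 fun z hzp hzq => ?_
  exact hq'.1 (hpq z hzp (List.mem_of_mem_tail hzq) ▸ hzq)

theorem isCycle_cons_append_reverse {x w y : V} (hxw : G.Adj x w) {P : G.Walk w y}
    {A : G.Walk x y} (hP : P.IsPath) (hA : A.IsPath)
    (hPA : ∀ z ∈ P.support, z ∈ A.support → z = y) (hxwP : s(x, w) ∉ P.edges)
    (hwA : w ∉ A.support) : (cons hxw (P.append A.reverse)).IsCycle := by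
  rw [cons_isCycle_iff, edges_append, List.mem_append, not_or]
  refine ⟨hP.append hA.reverse fun z hz hz' => hPA z hz ?_, hxwP, fun h => hwA ?_⟩
  · rwa [support_reverse, List.mem_reverse] at hz'
  · simpa using A.reverse.snd_mem_support_of_mem_edges h

theorem exists_isPath_to_first_mem {U : Set V} {a t : V} (p : G.Walk a t) (ht : t ∈ U) :
    ∃ y ∈ U, ∃ q : G.Walk a y,
      q.IsPath ∧ q.support ⊆ p.support ∧ ∀ z ∈ q.support, z ∈ U → z = y := by
  classical
  suffices ∃ y ∈ U, ∃ q : G.Walk a y, q.support ⊆ p.support ∧ ∀ z ∈ q.support, z ∈ U → z = y by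
    obtain ⟨y, hy, q, hqp, hqU⟩ := this
    have hsub := q.support_bypass_subset_support
    exact ⟨y, hy, q.bypass, q.bypass_isPath, fun z hz => hqp (hsub hz),
      fun z hz => hqU z (hsub hz)⟩
  induction p with
  | nil => exact ⟨_, ht, nil, List.Subset.refl _, by simp⟩
  | @cons a b t h p ih =>
    by_cases ha : a ∈ U
    · exact ⟨a, ha, nil, by simp, by simp⟩
    obtain ⟨y, hy, q, hqp, hqU⟩ := ih ht
    refine ⟨y, hy, cons h q, ?_, ?_⟩
    · rw [support_cons, support_cons]
      exact List.cons_subset_cons a hqp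
    · intro z hz hzU
      rw [support_cons, List.mem_cons] at hz
      rcases hz with rfl | hz
      · exact absurd hzU ha
      · exact hqU z hz hzU

end Walk

theorem exists_isPath_of_preconnected_induce {s : Set V} (h : (G.induce s).Preconnected)
    {a b : V} (ha : a ∈ s) (hb : b ∈ s) : ∃ p : G.Walk a b, p.IsPath ∧ ∀ z ∈ p.support, z ∈ s := by
  classical
  obtain ⟨q⟩ := h ⟨a, ha⟩ ⟨b, hb⟩
  let p := q.map (Embedding.induce s).toHom
  refine ⟨p.bypass, p.bypass_isPath, fun z hz => ?_⟩
  have hz' := p.support_bypass_subset_support hz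
  rw [Walk.support_map, List.mem_map] at hz'
  obtain ⟨z', -, rfl⟩ := hz'
  exact z'.2

theorem Connected.exists_adj_of_ne_univ (hG : G.Connected) {U : Set V} (hU : U.Nonempty)
    (hU' : U ≠ Set.univ) : ∃ x ∈ U, ∃ w ∉ U, G.Adj x w := by
  obtain ⟨u, hu⟩ := hU
  obtain ⟨w, hw⟩ := (Set.ne_univ_iff_exists_notMem U).mp hU'
  obtain ⟨d, -, hd, hd'⟩ := (hG.preconnected u w).some.exists_boundary_dart U hu hw
  exact ⟨d.fst, hd, d.snd, hd', d.adj⟩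

end SimpleGraph

section KConnected

variable {V : Type*} {G : SimpleGraph V} {k : ℕ}

theorem KConnected.finite (hG : KConnected k G) : Finite V :=
  Nat.finite_of_card_ne_zero (by have := hG.1; omega)

theorem KConnected.exists_isPath_avoiding (hG : KConnected k G) {S : Set V} (hS : S.Finite)
    (hSk : S.ncard < k) {a b : V} (ha : a ∉ S) (hb : b ∉ S) :
    ∃ p : G.Walk a b, p.IsPath ∧ ∀ z ∈ p.support, z ∉ S :=
  exists_isPath_of_preconnected_induce (hG.2 S hS hSk).preconnected ha hb

theorem KConnected.connected (hG : KConnected k G) (hk : 0 < k) : G.Connected := by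
  have : Nonempty V := (Nat.card_pos_iff.mp (by have := hG.1; omega)).1
  refine ⟨fun a b => ?_⟩
  obtain ⟨p, -⟩ := hG.exists_isPath_avoiding Set.finite_empty (by simpa using hk)
    (Set.notMem_empty a) (Set.notMem_empty b)
  exact p.reachable

theorem KConnected.exists_isPath_not_mem (hG : KConnected 2 G) {a b x : V} (ha : a ≠ x)
    (hb : b ≠ x) : ∃ p : G.Walk a b, p.IsPath ∧ x ∉ p.support := by
  obtain ⟨p, hp, hpx⟩ :=
    hG.exists_isPath_avoiding (Set.finite_singleton x) (by simp) (S := {x}) ha hb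
  exact ⟨p, hp, fun hx => hpx x hx rfl⟩

theorem KConnected.exists_ne_ne (hG : KConnected 2 G) (x y : V) : ∃ z, z ≠ x ∧ z ≠ y := by
  have := hG.finite
  refine ENat.exists_ne_ne_of_three_le ?_ x y
  rw [ENat.card_eq_coe_natCard]
  exact_mod_cast (by have := hG.1; omega : 3 ≤ Nat.card V)

theorem KConnected.exists_adj_ne (hG : KConnected 2 G) {x a : V} (hxa : x ≠ a) :
    ∃ b, G.Adj x b ∧ b ≠ a := by
  obtain ⟨z, hzx, hza⟩ := hG.exists_ne_ne x a
  obtain ⟨p, -, hap⟩ := hG.exists_isPath_not_mem hxa hza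
  cases p with
  | nil => exact absurd rfl hzx
  | cons h q =>
    refine ⟨_, h, ?_⟩
    rintro rfl
    exact hap (by simp)

theorem KConnected.exists_ear (hG : KConnected 2 G) {U : Set V} {x w : V} (hx : x ∈ U)
    (hxw : G.Adj x w) :
    ∃ y ∈ U, ∃ P : G.Walk w y,
      P.IsPath ∧ (∀ z ∈ P.support, z ∈ U → z = y) ∧ s(x, w) ∉ P.edges := by
  have hwx : w ≠ x := hxw.ne.symm
  by_cases hU : ∃ y₀ ∈ U, y₀ ≠ x
  · obtain ⟨y₀, hy₀, hy₀x⟩ := hU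
    obtain ⟨Q, -, hxQ⟩ := hG.exists_isPath_not_mem hwx hy₀x
    obtain ⟨y, hy, P, hP, hPQ, hPU⟩ := Q.exists_isPath_to_first_mem hy₀
    exact ⟨y, hy, P, hP, hPU, fun h => hxQ (hPQ (P.fst_mem_support_of_mem_edges h))⟩
  · -- `x` is the only vertex of `U`: the ear returns to `x` through a second neighbour `b`
    push Not at hU
    obtain ⟨b, hxb, hbw⟩ := hG.exists_adj_ne hxw.ne
    obtain ⟨Q, hQ, hxQ⟩ := hG.exists_isPath_not_mem hwx hxb.ne.symm
    refine ⟨x, hx, Q.concat hxb.symm, hQ.concat hxQ hxb.symm, fun z _ hz => hU z hz, ?_⟩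
    simp only [Walk.edges_concat, List.concat_eq_append, List.mem_append, List.mem_singleton,
      not_or]
    exact ⟨fun h => hxQ (Q.fst_mem_support_of_mem_edges h), by simp [hwx, hbw.symm]⟩

end KConnected

namespace SimpleGraph

variable {V : Type*} {G : SimpleGraph V}

section Ascending

variable {R : Type*} [AddCommGroupWithOne R]

def Walk.IsAscending (f : V → R) {u v : V} (p : G.Walk u v) : Prop :=
  ∀ d ∈ p.darts, f d.snd = f d.fst + 1

def AscendingConnectedOn (G : SimpleGraph V) (f : V → R) (U : Set V) : Prop :=
  ∀ u ∈ U, ∀ v ∈ U, ∃ p : G.Walk u v, p.IsAscending f ∧ ∀ z ∈ p.support, z ∈ U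

namespace Walk

variable {f g : V → R} {u v w : V}

@[simp]
theorem isAscending_nil : (nil : G.Walk u u).IsAscending f := by
  simp [IsAscending]

@[simp]
theorem isAscending_cons (h : G.Adj u v) (p : G.Walk v w) :
    (cons h p).IsAscending f ↔ f v = f u + 1 ∧ p.IsAscending f := by
  simp [IsAscending]

theorem isAscending_concat (p : G.Walk u v) (h : G.Adj v w) :
    (p.concat h).IsAscending f ↔ p.IsAscending f ∧ f w = f v + 1 := by
  simp [IsAscending, darts_concat, or_imp, forall_and]

theorem IsAscending.mono {u' v' : V} {p : G.Walk u v} {q : G.Walk u' v'}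
    (hp : p.IsAscending f) (h : q.darts ⊆ p.darts) : q.IsAscending f :=
  fun d hd => hp d (h hd)

theorem IsAscending.append {p : G.Walk u v} {q : G.Walk v w} (hp : p.IsAscending f)
    (hq : q.IsAscending f) : (p.append q).IsAscending f := by
  intro d hd
  rw [darts_append, List.mem_append] at hd
  exact hd.elim (hp d) (hq d)

theorem IsAscending.congr {p : G.Walk u v} (hp : p.IsAscending f)
    (hfg : ∀ z ∈ p.support, f z = g z) : p.IsAscending g := by
  intro d hd
  rw [← hfg _ (p.dart_fst_mem_support_of_mem_darts hd),
    ← hfg _ (p.dart_snd_mem_support_of_mem_darts hd)]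
  exact hp d hd

theorem IsAscending.natCast_length {p : G.Walk u v} (hp : p.IsAscending f) :
    (p.length : R) = f v - f u := by
  induction p with
  | nil => simp
  | cons h q ih =>
    rw [isAscending_cons] at hp
    rw [length_cons, Nat.cast_succ, ih hp.2, hp.1]
    abel

theorem IsPath.exists_isAscending {p : G.Walk u v} (hp : p.IsPath) (f : V → R) (c : R) :
    ∃ g : V → R, (∀ z ∉ p.support, g z = f z) ∧ g u = c ∧ p.IsAscending g := by
  classical
  induction p generalizing c with
  | @nil a =>
    refine ⟨Function.update f a c, fun z hz => Function.update_of_ne ?_ c f, by simp,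
      isAscending_nil⟩
    simpa using hz
  | @cons u v w h q ih =>
    rw [cons_isPath_iff] at hp
    obtain ⟨g, hgf, hgv, hgq⟩ := ih hp.1 (c + 1)
    have hvu : v ≠ u := fun hvu => hp.2 (hvu ▸ q.start_mem_support)
    refine ⟨Function.update g u c, fun z hz => ?_, by simp, ?_⟩
    · simp only [support_cons, List.mem_cons, not_or] at hz
      rw [Function.update_of_ne hz.1, hgf z hz.2]
    · rw [isAscending_cons, Function.update_of_ne hvu, Function.update_self, hgv]
      refine ⟨rfl, hgq.congr fun z hz => ?_⟩
      exact (Function.update_of_ne (ne_of_mem_of_not_mem hz hp.2) _ _).symm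

end Walk

theorem ascendingConnectedOn_singleton (f : V → R) (x : V) : G.AscendingConnectedOn f {x} := by
  rintro u rfl v rfl
  exact ⟨Walk.nil, Walk.isAscending_nil, by simp⟩

theorem AscendingConnectedOn.union_support {f g : V → R} {U : Set V}
    (hU : G.AscendingConnectedOn f U) (hgf : ∀ z ∈ U, g z = f z) {x y : V} (hx : x ∈ U)
    (hy : y ∈ U) {E : G.Walk y x} (hE : E.IsAscending g) :
    G.AscendingConnectedOn g (U ∪ {z | z ∈ E.support}) := by
  classical
  have hU' : G.AscendingConnectedOn g U := fun u hu v hv => by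
    obtain ⟨p, hp, hpU⟩ := hU u hu v hv
    exact ⟨p, hp.congr fun z hz => (hgf z (hpU z hz)).symm, hpU⟩
  set U' := U ∪ {z | z ∈ E.support}
  intro u hu v hv
  have toX : ∃ p : G.Walk u x, p.IsAscending g ∧ ∀ z ∈ p.support, z ∈ U' := by
    rcases hu with hu | hu
    · obtain ⟨p, hp, hpU⟩ := hU' u hu x hx
      exact ⟨p, hp, fun z hz => Or.inl (hpU z hz)⟩
    · exact ⟨E.dropUntil u hu, hE.mono (E.darts_dropUntil_subset_darts hu),
        fun z hz => Or.inr (E.support_dropUntil_subset_support hu hz)⟩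
  have fromY : ∃ p : G.Walk y v, p.IsAscending g ∧ ∀ z ∈ p.support, z ∈ U' := by
    rcases hv with hv | hv
    · obtain ⟨p, hp, hpU⟩ := hU' y hy v hv
      exact ⟨p, hp, fun z hz => Or.inl (hpU z hz)⟩
    · exact ⟨E.takeUntil v hv, hE.mono (E.darts_takeUntil_subset_darts hv),
        fun z hz => Or.inr (E.support_takeUntil_subset_support hv hz)⟩
  obtain ⟨p₁, hp₁, hp₁U⟩ := toX
  obtain ⟨p₂, hp₂, hp₂U⟩ := hU' x hx y hy
  obtain ⟨p₃, hp₃, hp₃U⟩ := fromY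
  refine ⟨p₁.append (p₂.append p₃), hp₁.append (hp₂.append hp₃), fun z hz => ?_⟩
  simp only [Walk.mem_support_append_iff] at hz
  rcases hz with hz | hz | hz
  · exact hp₁U z hz
  · exact Or.inl (hp₂U z hz)
  · exact hp₃U z hz

end Ascending

def sumColoring {R : Type*} [AddCommMagma R] (f : V → R) : Sym2 V → R :=
  Sym2.lift ⟨fun a b => f a + f b, fun a b => add_comm (f a) (f b)⟩

theorem Walk.IsAscending.getElem_map_edges {R : Type*} [CommRing R] {f : V → R} {u v : V}
    {p : G.Walk u v} (hp : p.IsAscending f) (k : ℕ)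
    (hk : k < (p.edges.map (sumColoring f)).length) :
    (p.edges.map (sumColoring f))[k] = 2 * f u + 1 + 2 * k := by
  induction p generalizing k with
  | nil => simp at hk
  | cons h q ih =>
    rw [isAscending_cons] at hp
    cases k with
    | zero =>
      simp only [edges_cons, List.map_cons, List.getElem_cons_zero, sumColoring, Sym2.lift_mk,
        hp.1, Nat.cast_zero]
      ring
    | succ k =>
      simp only [edges_cons, List.map_cons, List.getElem_cons_succ, ih hp.2, hp.1]
      push_cast
      ring

section Ear

variable {n : ℕ} (hcyc : ∀ (v : V) (c : G.Walk v v), c.IsCycle → n ∣ c.length)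
include hcyc

theorem AscendingConnectedOn.exists_of_ear {f : V → ZMod n} {U : Set V}
    (hU : G.AscendingConnectedOn f U) {x w y : V} (hx : x ∈ U) (hw : w ∉ U) (hy : y ∈ U)
    (hxw : G.Adj x w) {P : G.Walk w y} (hP : P.IsPath) (hPU : ∀ z ∈ P.support, z ∈ U → z = y)
    (hxwP : s(x, w) ∉ P.edges) :
    ∃ (g : V → ZMod n) (U' : Set V), G.AscendingConnectedOn g U' ∧ U ⊆ U' ∧ w ∈ U' := by
  classical
  obtain ⟨A₀, hA₀, hA₀U⟩ := hU x hx y hy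
  have hAU : ∀ z ∈ A₀.bypass.support, z ∈ U :=
    fun z hz => hA₀U z (A₀.support_bypass_subset_support hz)
  have hC := Walk.isCycle_cons_append_reverse hxw hP A₀.bypass_isPath
    (fun z hz hzA => hPU z hz (hAU z hzA)) hxwP (fun h => hw (hAU w h))
  have hlen : ((P.length + 1 : ℕ) : ZMod n) = f x - f y := by
    have hCn := (ZMod.natCast_eq_zero_iff _ n).mpr (hcyc x _ hC)
    have hA := (hA₀.mono A₀.darts_bypass_subset_darts).natCast_length
    simp only [Walk.length_cons, Walk.length_append, Walk.length_reverse] at hCn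
    push_cast at hCn ⊢
    linear_combination hCn - hA
  obtain ⟨g, hgf, hgy, hgP⟩ := hP.reverse.exists_isAscending f (f y)
  have hgU : ∀ z ∈ U, g z = f z := by
    intro z hz
    by_cases hzP : z ∈ P.support
    · rw [hPU z hzP hz]
      exact hgy
    · exact hgf z (by simpa using hzP)
  have hE : (P.reverse.concat hxw.symm).IsAscending g := by
    refine (Walk.isAscending_concat _ _).mpr ⟨hgP, ?_⟩
    have hgw := hgP.natCast_length
    rw [Walk.length_reverse, hgy] at hgw
    push_cast at hlen
    rw [hgU x hx]
    linear_combination hgw - hlen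
  exact ⟨g, _, hU.union_support hgU hx hy hE, Set.subset_union_left,
    Or.inr (by simp [Walk.support_concat])⟩

theorem AscendingConnectedOn.exists_ssuperset (hG : KConnected 2 G) {f : V → ZMod n}
    {U : Set V} (hU : G.AscendingConnectedOn f U) (hne : U.Nonempty) (huniv : U ≠ Set.univ) :
    ∃ (g : V → ZMod n) (U' : Set V), G.AscendingConnectedOn g U' ∧ U ⊂ U' := by
  obtain ⟨x, hx, w, hw, hxw⟩ := (hG.connected two_pos).exists_adj_of_ne_univ hne huniv
  obtain ⟨y, hy, P, hP, hPU, hxwP⟩ := hG.exists_ear hx hxw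
  obtain ⟨g, U', hU', hUU', hwU'⟩ := hU.exists_of_ear hcyc hx hw hy hxw hP hPU hxwP
  exact ⟨g, U', hU', (Set.ssubset_iff_of_subset hUU').mpr ⟨w, hwU', hw⟩⟩

theorem exists_ascendingConnectedOn_univ (hG : KConnected 2 G) :
    ∃ f : V → ZMod n, G.AscendingConnectedOn f Set.univ := by
  have := hG.finite
  obtain ⟨x⟩ := (hG.connected two_pos).nonempty
  let good : Set (Set V) := {U | (∃ f : V → ZMod n, G.AscendingConnectedOn f U) ∧ U.Nonempty}
  obtain ⟨U, hmax⟩ := (Set.toFinite good).exists_maximal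
    ⟨{x}, ⟨0, ascendingConnectedOn_singleton 0 x⟩, Set.singleton_nonempty x⟩
  obtain ⟨⟨f, hf⟩, hne⟩ := hmax.prop
  by_cases huniv : U = Set.univ
  · exact ⟨f, huniv ▸ hf⟩
  obtain ⟨g, U', hU', hUU'⟩ := hf.exists_ssuperset hcyc hG hne huniv
  exact absurd hUU' (hmax.not_ssuperset ⟨⟨g, hU'⟩, hne.mono hUU'.subset⟩)

end Ear

end SimpleGraph

/-- If `G` is 2-connected and the length of every cycle in `G` is divisible by 3,
then `spc(G) ≤ 3`. -/
theorem spc_le_three_of_cycles_div_three {V : Type*} (G : SimpleGraph V)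
    (hG : KConnected 2 G)
    (hcyc : ∀ (v : V) (w : G.Walk v v), w.IsCycle → 3 ∣ w.length) :
    ∃ c : Sym2 V → Fin 3, IsStronglyProperConnected G c := by
  classical
  obtain ⟨f, hf⟩ := exists_ascendingConnectedOn_univ hcyc hG
  -- `ZMod 3` is `Fin 3` by definition
  refine ⟨sumColoring f, fun u v _ => ?_⟩
  obtain ⟨p, hp, -⟩ := hf u trivial v trivial
  have hp' := hp.mono p.darts_bypass_subset_darts
  exact ⟨p.bypass, p.bypass_isPath, stronglyProperSeq_of_getElem_eq _ hp'.getElem_map_edges⟩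
end

section
/- Let G be a simple graph in which the length of every cycle is divisible by 3, let s and t be distinct vertices of G, and let P, Q, R be three pairwise distinct s–t paths in G that are pairwise internally vertex-disjoint (any two of them share only the vertices s and t). Then the length of each of P, Q and R is divisible by 3. -/
open SimpleGraph

namespace SimpleGraph.Walk

variable {V : Type*} {G : SimpleGraph V} {u v : V}

theorem eq_of_length_eq_one {p q : G.Walk u v} (hp : p.length = 1) (hq : q.length = 1) :
    p = q :=
  match p, q, hp, hq with
  | .cons _ .nil, .cons _ .nil, _, _ => rfl

theorem IsPath.notMem_support_tail_start {p : G.Walk u v} (hp : p.IsPath) :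
    u ∉ p.support.tail := by
  have hnodup := hp.support_nodup
  rw [← cons_tail_support] at hnodup
  exact (List.nodup_cons.mp hnodup).1

theorem IsPath.isCycle_append_reverse {p q : G.Walk u v} (hp : p.IsPath) (hq : q.IsPath)
    (hne : p ≠ q) (hd : ∀ x ∈ p.support, x ∈ q.support → x = u ∨ x = v) :
    (p.append q.reverse).IsCycle := by
  have huv : u ≠ v := by
    rintro rfl
    exact hne ((isPath_iff_nil.mp hp).eq_nil.trans (isPath_iff_nil.mp hq).eq_nil.symm)
  refine hp.isCycle_append hq.reverse ?_ ?_
  · intro x hxp hxq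
    have hxq' : x ∈ q.support := by
      simpa using List.mem_of_mem_tail hxq
    rcases hd x (List.mem_of_mem_tail hxp) hxq' with rfl | rfl
    · exact hp.notMem_support_tail_start hxp
    · exact hq.reverse.notMem_support_tail_start hxq
  · have hp0 : p.length ≠ 0 := fun h => huv (eq_of_length_eq_zero h)
    have hq0 : q.length ≠ 0 := fun h => huv (eq_of_length_eq_zero h)
    by_contra! hle
    rw [length_reverse] at hle
    exact hne (eq_of_length_eq_one (by omega) (by omega))

theorem dvd_length_add_of_internallyDisjoint {n : ℕ}
    (hcyc : ∀ (w : V) (c : G.Walk w w), c.IsCycle → n ∣ c.length)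
    {p q : G.Walk u v} (hp : p.IsPath) (hq : q.IsPath) (hne : p ≠ q)
    (hd : ∀ x ∈ p.support, x ∈ q.support → x = u ∨ x = v) :
    n ∣ p.length + q.length := by
  simpa using hcyc u _ (hp.isCycle_append_reverse hq hne hd)

end SimpleGraph.Walk

theorem three_fan_paths_length_div_three_general {V : Type*} (G : SimpleGraph V)
    (hcyc : ∀ (v : V) (w : G.Walk v v), w.IsCycle → 3 ∣ w.length)
    {s t : V}
    (p q r : G.Walk s t)
    (hp : p.IsPath) (hq : q.IsPath) (hr : r.IsPath)
    (hpq : p ≠ q) (hpr : p ≠ r) (hqr : q ≠ r)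
    (hpq' : ∀ x ∈ p.support, x ∈ q.support → x = s ∨ x = t)
    (hpr' : ∀ x ∈ p.support, x ∈ r.support → x = s ∨ x = t)
    (hqr' : ∀ x ∈ q.support, x ∈ r.support → x = s ∨ x = t) :
    3 ∣ p.length ∧ 3 ∣ q.length ∧ 3 ∣ r.length := by
  have hpq3 := Walk.dvd_length_add_of_internallyDisjoint hcyc hp hq hpq hpq'
  have hpr3 := Walk.dvd_length_add_of_internallyDisjoint hcyc hp hr hpr hpr'
  have hqr3 := Walk.dvd_length_add_of_internallyDisjoint hcyc hq hr hqr hqr'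
  omega

/-- Let `G` be a graph in which the length of every cycle is divisible by 3, and
let `p`, `q`, `r` be three pairwise distinct, pairwise internally vertex-disjoint
paths between two distinct vertices `s` and `t`. Then the length of each of the
three paths is divisible by 3. -/
theorem three_fan_paths_length_div_three {V : Type*} (G : SimpleGraph V)
    (hcyc : ∀ (v : V) (w : G.Walk v v), w.IsCycle → 3 ∣ w.length)
    {s t : V} (hst : s ≠ t)
    (p q r : G.Walk s t)
    (hp : p.IsPath) (hq : q.IsPath) (hr : r.IsPath)
    (hpq : p ≠ q) (hpr : p ≠ r) (hqr : q ≠ r)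
    (hpq' : ∀ x ∈ p.support, x ∈ q.support → x = s ∨ x = t)
    (hpr' : ∀ x ∈ p.support, x ∈ r.support → x = s ∨ x = t)
    (hqr' : ∀ x ∈ q.support, x ∈ r.support → x = s ∨ x = t) :
    3 ∣ p.length ∧ 3 ∣ q.length ∧ 3 ∣ r.length :=
  three_fan_paths_length_div_three_general G hcyc p q r hp hq hr hpq hpr hqr hpq' hpr' hqr'
end

section
/- Let H be a minimally 2-connected simple graph and let (P_1, …, P_h) be a greedy open ear decomposition of H. Then the ears appear in order of nonincreasing length: for every 1 ≤ i < h, the ear P_{i+1} has at most as many edges as P_i. -/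
open SimpleGraph

/-- `H` is minimally 2-connected: it is 2-connected, but deleting any edge
destroys 2-connectedness. -/
def MinimallyTwoConnected {V : Type*} (H : SimpleGraph V) : Prop :=
  KConnected 2 H ∧ ∀ e ∈ H.edgeSet, ¬ KConnected 2 (H.deleteEdges {e})

/-- The subgraph `H_k = P₁ ∪ ⋯ ∪ P_k` formed by the first `k` ears
(the ears with indices `0, …, k-1`). -/
def earPrefix {V : Type*} {H : SimpleGraph V} {h : ℕ} {s t : Fin (h + 1) → V}
    (ear : (i : Fin (h + 1)) → H.Walk (s i) (t i)) (k : ℕ) : H.Subgraph :=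
  ⨆ i : Fin (h + 1), if (i : ℕ) < k then (ear i).toSubgraph else ⊥

/-- An open ear decomposition `(P₁, …, P_{h+1})` of `H` (indexed here by
`Fin (h+1)`): the ears partition the edge set of `H`, the first ear is a cycle,
and every later ear is a path with two distinct endpoints meeting the union of
the previous ears exactly in its endpoints. -/
structure OpenEarDecomp {V : Type*} (H : SimpleGraph V) (h : ℕ) where
  /-- first endpoints of the ears -/
  s : Fin (h + 1) → V
  /-- second endpoints of the ears -/
  t : Fin (h + 1) → V
  /-- the ears, as walks in `H` -/
  ear : (i : Fin (h + 1)) → H.Walk (s i) (t i)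
  /-- the first ear is closed -/
  first_closed : s 0 = t 0
  /-- the first ear is a cycle -/
  first_cycle : ((ear 0).copy rfl first_closed.symm).IsCycle
  /-- every later ear is a path -/
  ears_path : ∀ i : Fin (h + 1), 0 < (i : ℕ) → (ear i).IsPath
  /-- every later ear has two distinct endpoints -/
  ends_ne : ∀ i : Fin (h + 1), 0 < (i : ℕ) → s i ≠ t i
  /-- the endpoints of a later ear lie in the union of the previous ears -/
  ends_mem : ∀ i : Fin (h + 1), 0 < (i : ℕ) →
    s i ∈ (earPrefix ear i).verts ∧ t i ∈ (earPrefix ear i).verts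
  /-- a later ear meets the union of the previous ears only in its endpoints -/
  internal_disjoint : ∀ i : Fin (h + 1), 0 < (i : ℕ) →
    ∀ x ∈ (ear i).support, x ∈ (earPrefix ear i).verts → x = s i ∨ x = t i
  /-- distinct ears are edge-disjoint -/
  edge_disjoint : ∀ i j : Fin (h + 1), i ≠ j →
    ∀ e ∈ (ear i).edges, e ∉ (ear j).edges
  /-- the ears cover all edges of `H` -/
  edges_cover : ∀ e ∈ H.edgeSet, ∃ i : Fin (h + 1), e ∈ (ear i).edges

/-- An ear decomposition is *greedy* if at every step the longest possible ear
is added: the first ear is a longest cycle of `H`, and no admissible ear is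
longer than the ear actually added. -/
def OpenEarDecomp.Greedy {V : Type*} {H : SimpleGraph V} {h : ℕ}
    (D : OpenEarDecomp H h) : Prop :=
  (∀ (v : V) (w : H.Walk v v), w.IsCycle → w.length ≤ (D.ear 0).length) ∧
  (∀ i : Fin (h + 1), 0 < (i : ℕ) →
    ∀ (u v : V) (q : H.Walk u v), q.IsPath → u ≠ v →
      u ∈ (earPrefix D.ear i).verts → v ∈ (earPrefix D.ear i).verts →
      (∀ x ∈ q.support, x ∈ (earPrefix D.ear i).verts → x = u ∨ x = v) →
      (∀ e ∈ q.edges, e ∉ (earPrefix D.ear i).edgeSet) →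
      q.length ≤ (D.ear i).length)

/-!
Let `P` be the `i`-th ear and `q` the next one, so `q` is an ear of `H_{i-1} ∪ P`. If an endpoint
of `q` lies in the interior of `P`, prolong `q` along `P` to an endpoint of `P`; if both do,
replace the segment of `P` between them by `q`. The result is an ear of `H_{i-1}` that uses only
edges of `q` and `P`, so it was available at step `i` and greediness bounds its length, hence that
of `q`, by the length of `P`. For the second ear, `q` together with an arc of the first cycle is a
cycle longer than `q`, and the first ear is a longest cycle.
-/

namespace SimpleGraph.Walk

variable {V : Type*} {G : SimpleGraph V}

theorem isPath_append_iff {u v w : V} {p : G.Walk u v} {q : G.Walk v w} :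
    (p.append q).IsPath ↔ p.IsPath ∧ q.IsPath ∧ ∀ x ∈ p.support, x ∈ q.support → x = v := by
  induction p with
  | nil => simp
  | cons h p ih =>
    simp only [cons_append, cons_isPath_iff, ih, support_cons, List.mem_cons,
      mem_support_append_iff]
    grind [start_mem_support, end_mem_support]

theorem IsPath.start_notMem_support_tail {u v : V} {p : G.Walk u v} (hp : p.IsPath) :
    u ∉ p.support.tail :=
  (List.nodup_cons.1 (p.cons_tail_support ▸ hp.support_nodup)).1

structure IsEar (A : Set V) {u v : V} (p : G.Walk u v) : Prop where
  isPath : p.IsPath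
  ne : u ≠ v
  start_mem : u ∈ A
  end_mem : v ∈ A
  eq_or_eq_of_mem : ∀ x ∈ p.support, x ∈ A → x = u ∨ x = v

variable {A : Set V} {a b u v : V}

theorem IsEar.reverse {p : G.Walk u v} (hp : p.IsEar A) : p.reverse.IsEar A where
  isPath := hp.isPath.reverse
  ne := hp.ne.symm
  start_mem := hp.end_mem
  end_mem := hp.start_mem
  eq_or_eq_of_mem x hx hxA := by
    rw [support_reverse, List.mem_reverse] at hx
    exact (hp.eq_or_eq_of_mem x hx hxA).symm

theorem IsEar.exists_extension_of_start_mem {P : G.Walk a b} (hP : P.IsEar A) {q : G.Walk u v}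
    (hq : q.IsEar (A ∪ {x | x ∈ P.support})) (hu : u ∈ A) (hv : v ∉ A) :
    ∃ (x y : V) (q' : G.Walk x y), q'.IsEar A ∧ q.length ≤ q'.length ∧
      ∀ e ∈ q'.edges, e ∈ q.edges ∨ e ∈ P.edges := by
  wlog hub : u ≠ b generalizing a b P
  · have := this hP.reverse (by simpa using hq) (not_not.1 hub ▸ hP.ne.symm)
    simpa using this
  have hvP : v ∈ P.support := hq.end_mem.resolve_left hv
  obtain ⟨p₁, p₂, rfl⟩ := mem_support_iff_exists_append.1 hvP
  obtain ⟨-, hp₂, hmeet⟩ := isPath_append_iff.1 hP.isPath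
  have ha : a ∉ p₂.support := fun ha => hv (hmeet a p₁.start_mem_support ha ▸ hP.start_mem)
  refine ⟨u, b, q.append p₂, ⟨isPath_append_iff.2 ⟨hq.isPath, hp₂, fun x hxq hxp => ?_⟩, hub,
    hu, hP.end_mem, fun x hx hxA => ?_⟩, by simp, fun e he => ?_⟩
  · rcases hq.eq_or_eq_of_mem x hxq (Or.inr (by simp [hxp])) with rfl | rfl
    · rcases hP.eq_or_eq_of_mem x (by simp [hxp]) hu with rfl | rfl
      · exact absurd hxp ha
      · exact absurd rfl hub
    · rfl
  · rcases (mem_support_append_iff _ _).1 hx with hx | hx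
    · exact (hq.eq_or_eq_of_mem x hx (Or.inl hxA)).imp id fun h => absurd (h ▸ hxA) hv
    · exact (hP.eq_or_eq_of_mem x (by simp [hx]) hxA).imp (fun h => absurd (h ▸ hx) ha) id
  · simp only [edges_append, List.mem_append] at he ⊢
    tauto

theorem IsEar.replace_segment {p₁ : G.Walk a u} {r₁ : G.Walk u v} {r₂ : G.Walk v b}
    (hP : (p₁.append (r₁.append r₂)).IsEar A) {q : G.Walk u v}
    (hq : q.IsEar (A ∪ {x | x ∈ (p₁.append (r₁.append r₂)).support}))
    (hu : u ∉ A) (hv : v ∉ A) :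
    (p₁.append (q.append r₂)).IsEar A := by
  obtain ⟨hp₁, hr, hmeet₁⟩ := isPath_append_iff.1 hP.isPath
  obtain ⟨-, hr₂, hmeet₂⟩ := isPath_append_iff.1 hr
  have hqP : ∀ x ∈ q.support, x ∈ (p₁.append (r₁.append r₂)).support → x = u ∨ x = v :=
    fun x hx hxP => hq.eq_or_eq_of_mem x hx (Or.inr hxP)
  have hqr₂ : (q.append r₂).IsPath := by
    refine isPath_append_iff.2 ⟨hq.isPath, hr₂, fun x hxq hxr => ?_⟩
    rcases hqP x hxq (by simp [hxr]) with rfl | rfl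
    · exact hmeet₂ x r₁.start_mem_support hxr
    · rfl
  refine ⟨isPath_append_iff.2 ⟨hp₁, hqr₂, fun x hxp hx => ?_⟩, hP.ne, hP.start_mem,
    hP.end_mem, fun x hx hxA => ?_⟩
  · rcases (mem_support_append_iff _ _).1 hx with hxq | hxr
    · rcases hqP x hxq (by simp [hxp]) with rfl | rfl
      · rfl
      · exact absurd (hmeet₁ x hxp (by simp)) hq.ne.symm
    · exact hmeet₁ x hxp (by simp [hxr])
  · simp only [mem_support_append_iff] at hx
    rcases hx with hx | hx | hx
    · exact hP.eq_or_eq_of_mem x (by simp [hx]) hxA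
    · rcases hq.eq_or_eq_of_mem x hx (Or.inl hxA) with rfl | rfl <;> contradiction
    · exact hP.eq_or_eq_of_mem x (by simp [hx]) hxA

theorem IsEar.exists_extension_of_notMem {P : G.Walk a b} (hP : P.IsEar A) {q : G.Walk u v}
    (hq : q.IsEar (A ∪ {x | x ∈ P.support})) (hu : u ∉ A) (hv : v ∉ A) :
    ∃ (x y : V) (q' : G.Walk x y), q'.IsEar A ∧ q.length ≤ q'.length ∧
      ∀ e ∈ q'.edges, e ∈ q.edges ∨ e ∈ P.edges := by
  obtain ⟨p₁, p₂, rfl⟩ := mem_support_iff_exists_append.1 (hq.start_mem.resolve_left hu)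
  rcases (mem_support_append_iff _ _).1 (hq.end_mem.resolve_left hv) with hv₁ | hv₂
  · have hv₁' : v ∈ p₁.reverse.support := by simpa using hv₁
    obtain ⟨r₁, r₂, hr⟩ := mem_support_iff_exists_append.1 hv₁'
    have hP' : (p₂.reverse.append (r₁.append r₂)).IsEar A := by
      simpa [← hr] using hP.reverse
    have hr_edges : ∀ e ∈ (r₁.append r₂).edges, e ∈ p₁.edges := fun e he => by
      simpa [← hr] using he
    refine ⟨b, a, _, hP'.replace_segment (by simpa [← hr, or_comm] using hq) hu hv,
      by simp; omega, fun e he => ?_⟩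
    simp only [edges_append, List.mem_append, edges_reverse, List.mem_reverse] at he
    rcases he with he | he | he
    · simp [he]
    · exact Or.inl he
    · simp [hr_edges e (by simp [he])]
  · obtain ⟨r₁, r₂, rfl⟩ := mem_support_iff_exists_append.1 hv₂
    refine ⟨a, b, _, hP.replace_segment hq hu hv, by simp; omega, fun e he => ?_⟩
    simp only [edges_append, List.mem_append] at he ⊢
    tauto

theorem IsEar.exists_extension {P : G.Walk a b} (hP : P.IsEar A) {q : G.Walk u v}
    (hq : q.IsEar (A ∪ {x | x ∈ P.support})) :
    ∃ (x y : V) (q' : G.Walk x y), q'.IsEar A ∧ q.length ≤ q'.length ∧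
      ∀ e ∈ q'.edges, e ∈ q.edges ∨ e ∈ P.edges := by
  by_cases hu : u ∈ A <;> by_cases hv : v ∈ A
  · refine ⟨u, v, q, ⟨hq.isPath, hq.ne, hu, hv, fun x hx hxA => ?_⟩, le_rfl, fun e he => .inl he⟩
    exact hq.eq_or_eq_of_mem x hx (.inl hxA)
  · exact hP.exists_extension_of_start_mem hq hu hv
  · simpa using hP.exists_extension_of_start_mem hq.reverse hv hu
  · exact hP.exists_extension_of_notMem hq hu hv

theorem IsCycle.exists_isCycle_length_gt_of_isEar {w : V} {C : G.Walk w w} (hC : C.IsCycle)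
    {q : G.Walk u v} (hq : q.IsEar {x | x ∈ C.support}) (hqC : ∀ e ∈ q.edges, e ∉ C.edges) :
    ∃ (x : V) (c : G.Walk x x), c.IsCycle ∧ q.length < c.length := by
  classical
  obtain ⟨c₁, c₂, hc⟩ := mem_support_iff_exists_append.1
    ((C.mem_support_rotate_iff u hq.start_mem).2 hq.end_mem)
  have hC' := hc ▸ hC.rotate hq.start_mem
  have hc₂ : c₂.IsPath := hC'.isPath_of_append_right (not_nil_of_ne hq.ne)
  have hc₂C : ∀ x ∈ c₂.support, x ∈ C.support := fun x hx => by
    simpa [← C.mem_support_rotate_iff u hq.start_mem, hc] using Or.inr hx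
  have hc₂C_edges : ∀ e ∈ c₂.edges, e ∈ C.edges := fun e he =>
    (C.rotate_edges u hq.start_mem).mem_iff.1 (by simp [hc, he])
  have hlen : q.length < (q.append c₂).length := by
    simpa [← not_nil_iff_lt_length] using not_nil_of_ne hq.ne.symm
  refine ⟨u, q.append c₂, (isCycle_def _).2 ⟨?_, fun h => by simp [h] at hlen, ?_⟩, hlen⟩
  · exact (isTrail_append _ _).2 ⟨hq.isPath.isTrail, hc₂.isTrail,
      fun e hq' hc₂' => hqC e hq' (hc₂C_edges e hc₂')⟩
  · rw [tail_support_append, List.nodup_append']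
    refine ⟨hq.isPath.support_nodup.tail, hc₂.support_nodup.tail, fun x hxq hxc => ?_⟩
    rcases hq.eq_or_eq_of_mem x (List.mem_of_mem_tail hxq) (hc₂C x (List.mem_of_mem_tail hxc))
      with rfl | rfl
    · exact hq.isPath.start_notMem_support_tail hxq
    · exact hc₂.start_notMem_support_tail hxc

end SimpleGraph.Walk

section EarPrefix

variable {V : Type*} {H : SimpleGraph V} {h : ℕ} {s t : Fin (h + 1) → V}
  (ear : (i : Fin (h + 1)) → H.Walk (s i) (t i))

theorem mem_earPrefix_verts_iff {k : ℕ} {x : V} :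
    x ∈ (earPrefix ear k).verts ↔ ∃ i : Fin (h + 1), (i : ℕ) < k ∧ x ∈ (ear i).support := by
  simp [earPrefix, Subgraph.verts_iSup, apply_ite Subgraph.verts]

theorem mem_earPrefix_edgeSet_iff {k : ℕ} {e : Sym2 V} :
    e ∈ (earPrefix ear k).edgeSet ↔ ∃ i : Fin (h + 1), (i : ℕ) < k ∧ e ∈ (ear i).edges := by
  simp [earPrefix, Subgraph.edgeSet_iSup, apply_ite Subgraph.edgeSet]

theorem earPrefix_verts_succ {k : ℕ} (hk : k < h + 1) :
    (earPrefix ear (k + 1)).verts =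
      (earPrefix ear k).verts ∪ {x | x ∈ (ear ⟨k, hk⟩).support} := by
  ext x
  simp only [mem_earPrefix_verts_iff, Set.mem_union, Set.mem_ofPred_eq]
  constructor
  · rintro ⟨i, hi, hx⟩
    rcases Nat.lt_succ_iff_lt_or_eq.1 hi with hi | rfl
    exacts [.inl ⟨i, hi, hx⟩, .inr hx]
  · rintro (⟨i, hi, hx⟩ | hx)
    exacts [⟨i, by omega, hx⟩, ⟨_, k.lt_succ_self, hx⟩]

theorem earPrefix_zero_verts : (earPrefix ear 0).verts = ∅ := by
  simp [Set.eq_empty_iff_forall_notMem, mem_earPrefix_verts_iff]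

end EarPrefix

namespace OpenEarDecomp

variable {V : Type*} {H : SimpleGraph V} {h : ℕ} (D : OpenEarDecomp H h)

theorem isEar {i : Fin (h + 1)} (hi : 0 < (i : ℕ)) :
    (D.ear i).IsEar (earPrefix D.ear i).verts :=
  ⟨D.ears_path i hi, D.ends_ne i hi, (D.ends_mem i hi).1, (D.ends_mem i hi).2,
    D.internal_disjoint i hi⟩

theorem notMem_earPrefix_edgeSet {i j : Fin (h + 1)} (hij : (i : ℕ) ≤ j) {e : Sym2 V}
    (he : e ∈ (D.ear j).edges) : e ∉ (earPrefix D.ear i).edgeSet := by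
  rw [mem_earPrefix_edgeSet_iff]
  rintro ⟨k, hk, hek⟩
  exact D.edge_disjoint j k (Fin.ne_of_val_ne (by omega)) e he hek

theorem Greedy.length_le {D : OpenEarDecomp H h} (hD : D.Greedy) {i : Fin (h + 1)}
    (hi : 0 < (i : ℕ)) {u v : V} {q : H.Walk u v} (hq : q.IsEar (earPrefix D.ear i).verts)
    (hqe : ∀ e ∈ q.edges, e ∉ (earPrefix D.ear i).edgeSet) : q.length ≤ (D.ear i).length :=
  hD.2 i hi u v q hq.isPath hq.ne hq.start_mem hq.end_mem hq.eq_or_eq_of_mem hqe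

end OpenEarDecomp

/-- In a greedy open ear decomposition of a minimally 2-connected graph, the
ears appear in order of nonincreasing length: each ear has at most as many
edges as the previous one. -/
theorem greedy_ears_length_antitone {V : Type*} (H : SimpleGraph V)
    {h : ℕ}
    (D : OpenEarDecomp H h) (hD : D.Greedy) :
    ∀ i : ℕ, ∀ hi : i + 1 < h + 1,
      (D.ear ⟨i + 1, hi⟩).length ≤ (D.ear ⟨i, by omega⟩).length := by
  intro i hi
  have hq := D.isEar (i := ⟨i + 1, hi⟩) i.succ_pos
  rw [earPrefix_verts_succ _ (by omega)] at hq
  rcases i with _ | i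
  · rw [earPrefix_zero_verts, Set.empty_union] at hq
    obtain ⟨x, c, hc, hlen⟩ := D.first_cycle.exists_isCycle_length_gt_of_isEar (by simpa using hq)
      fun e he => by simpa using D.edge_disjoint _ 0 (by simp [Fin.ext_iff]) e he
    exact hlen.le.trans (hD.1 x c hc)
  · have hP := D.isEar (i := ⟨i + 1, by omega⟩) i.succ_pos
    obtain ⟨x, y, q, hq', hlen, hedges⟩ := hP.exists_extension hq
    refine hlen.trans (hD.length_le i.succ_pos hq' fun e he => ?_)
    rcases hedges e he with he | he
    exacts [D.notMem_earPrefix_edgeSet (by simp) he, D.notMem_earPrefix_edgeSet le_rfl he]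
end

section
/- For every finite tree T with at least two vertices, pc(T) = Δ(T), where Δ(T) is the maximum degree of T; that is, the least number of colors in an edge coloring of T such that every pair of distinct vertices is joined by a properly colored path equals the maximum degree of T. -/
open SimpleGraph

/-- A list of colors is *proper* if no two consecutive terms are equal. -/
def ProperSeq {α : Type*} (l : List α) : Prop :=
  l.Chain' (· ≠ ·)

/-- An edge coloring of `G` is proper connected if every pair of distinct
vertices is joined by a path whose sequence of edge colors has no two equal
consecutive terms. -/
def IsProperConnected {V : Type*} (G : SimpleGraph V) {β : Type*}
    (c : Sym2 V → β) : Prop :=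
  ∀ u v : V, u ≠ v → ∃ p : G.Walk u v, p.IsPath ∧ ProperSeq (p.edges.map c)

/-- The proper connection number `pc(G)` of a graph `G`: the least number of
colors in a proper connected edge coloring of `G`. -/
noncomputable def pc {V : Type*} (G : SimpleGraph V) : ℕ :=
  sInf {n : ℕ | ∃ c : Sym2 V → Fin n, IsProperConnected G c}

/-!
Since `a v b` is the only path between two neighbours `a ≠ b` of `v` in a tree, a proper connected
coloring of a tree gives distinct colors to any two edges at a common vertex, so it uses at least
`Δ` colors. Conversely, every path is proper under such a coloring, and a tree has one with `Δ`
colors: root it, number the edges at each vertex `u` injectively by `lab u`, and color the edges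
from the root outwards, composing `lab u` with the transposition that lets the edge from `u` to its
parent keep the color it has already received.
-/

theorem properSeq_cons_cons {α : Type*} {a b : α} {l : List α} :
    ProperSeq (a :: b :: l) ↔ a ≠ b ∧ ProperSeq (b :: l) :=
  List.isChain_cons_cons

namespace SimpleGraph

variable {V β : Type*} {G : SimpleGraph V}

def IsProperEdgeColoring (G : SimpleGraph V) (c : Sym2 V → β) : Prop :=
  ∀ ⦃v a b : V⦄, G.Adj v a → G.Adj v b → a ≠ b → c s(v, a) ≠ c s(v, b)

theorem IsProperEdgeColoring.properSeq_map_edges_of_isPath {c : Sym2 V → β}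
    (hc : G.IsProperEdgeColoring c) :
    ∀ {u w : V} (p : G.Walk u w), p.IsPath → ProperSeq (p.edges.map c)
  | _, _, .nil, _ => List.isChain_nil
  | _, _, .cons _ .nil, _ => List.isChain_singleton _
  | u, _, .cons (v := v) huv (.cons (v := w) hvw p), hp => by
    have huw : u ≠ w := by
      rintro rfl
      simp at hp
    rw [Walk.cons_isPath_iff] at hp
    simp only [Walk.edges_cons, List.map_cons, properSeq_cons_cons]
    refine ⟨Sym2.eq_swap (a := u) ▸ hc huv.symm hvw huw, ?_⟩
    simpa using hc.properSeq_map_edges_of_isPath _ hp.1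

theorem IsProperEdgeColoring.isProperConnected {c : Sym2 V → β} (hc : G.IsProperEdgeColoring c)
    (hG : G.Preconnected) : IsProperConnected G c := fun u v _ ↦
  have ⟨p, hp⟩ := (hG u v).exists_isPath
  ⟨p, hp, hc.properSeq_map_edges_of_isPath p hp⟩

theorem IsAcyclic.isProperEdgeColoring_of_isProperConnected {c : Sym2 V → β} (hG : G.IsAcyclic)
    (hc : IsProperConnected G c) : G.IsProperEdgeColoring c := by
  intro v a b hva hvb hab
  obtain ⟨p, hp, hpc⟩ := hc a b hab
  have havb : (Walk.cons hva.symm (Walk.cons hvb .nil)).IsPath := by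
    simp [Walk.cons_isPath_iff, hvb.ne, hva.ne', hab]
  obtain rfl : p = _ := congrArg Subtype.val ((hG.subsingleton_path a b).elim ⟨p, hp⟩ ⟨_, havb⟩)
  simpa [Sym2.eq_swap (a := a)] using (properSeq_cons_cons.1 hpc).1

theorem IsProperEdgeColoring.degree_le_card [Fintype β] {c : Sym2 V → β}
    (hc : G.IsProperEdgeColoring c) (v : V) [Fintype (G.neighborSet v)] :
    G.degree v ≤ Fintype.card β := by
  rw [← card_neighborSet_eq_degree]
  refine Fintype.card_le_of_injective (fun a ↦ c s(v, a)) fun a b hab ↦ ?_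
  by_contra hne
  exact hc a.2 b.2 (Subtype.coe_ne_coe.2 hne) hab

theorem exists_injOn_neighborSet [Fintype β] [Nonempty β] (v : V) [Fintype (G.neighborSet v)]
    (h : G.degree v ≤ Fintype.card β) : ∃ f : V → β, Set.InjOn f (G.neighborSet v) :=
  Set.exists_injOn_iff_injective.2
    ⟨_, (Function.Embedding.nonempty_of_card_le (by rwa [card_neighborSet_eq_degree])).some.injective⟩

theorem Preconnected.maxDegree_pos [Fintype V] [DecidableRel G.Adj] [Nontrivial V]
    (hG : G.Preconnected) : 0 < G.maxDegree :=
  (G.degree_pos_iff_exists_adj _).2 (hG.exists_adj_of_nontrivial (Classical.arbitrary V))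
    |>.trans_le (G.degree_le_maxDegree _)

namespace IsTree

variable (hT : G.IsTree) (r : V)

noncomputable def pathTo (v : V) : G.Walk v r :=
  (hT.existsUnique_path v r).exists.choose

noncomputable def parent (v : V) : V :=
  (hT.pathTo r v).snd

noncomputable def depth (v : V) : ℕ :=
  (hT.pathTo r v).length

variable {hT r}

theorem isPath_pathTo (v : V) : (hT.pathTo r v).IsPath :=
  (hT.existsUnique_path v r).exists.choose_spec

theorem eq_pathTo {v : V} {p : G.Walk v r} (hp : p.IsPath) : p = hT.pathTo r v :=
  (hT.existsUnique_path v r).unique hp (isPath_pathTo v)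

theorem pathTo_root : hT.pathTo r r = .nil :=
  (eq_pathTo .nil).symm

theorem pathTo_parent (v : V) : hT.pathTo r (hT.parent r v) = (hT.pathTo r v).tail :=
  (eq_pathTo (isPath_pathTo v).tail).symm

theorem depth_parent_lt {v : V} (hv : v ≠ r) : hT.depth r (hT.parent r v) < hT.depth r v := by
  have := Walk.length_tail_add_one (Walk.not_nil_of_ne (p := hT.pathTo r v) hv)
  rw [← pathTo_parent] at this
  exact Nat.lt_of_succ_le this.le

theorem parent_eq_or_parent_eq_of_adj {a b : V} (hab : G.Adj a b) :
    a ≠ r ∧ hT.parent r a = b ∨ b ≠ r ∧ hT.parent r b = a := by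
  by_cases hb : b ∈ (hT.pathTo r a).support
  · refine .inl ⟨?_, (hT.isAcyclic.eq_snd_of_adj_start (isPath_pathTo a) hab hb).symm⟩
    rintro rfl
    simp [pathTo_root, hab.ne'] at hb
  · have hp : (Walk.cons hab.symm (hT.pathTo r a)).IsPath := (isPath_pathTo a).cons hb
    refine .inr ⟨?_, by simp [parent, ← eq_pathTo hp]⟩
    rintro rfl
    exact Walk.not_nil_cons (Walk.isPath_iff_nil.1 hp)

noncomputable def parentEdgeColor [DecidableEq V] [DecidableEq β] (hT : G.IsTree) (r : V)
    (b₀ : β) (lab : V → V → β) (v : V) : β :=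
  if hv : v = r then b₀
  else
    have := depth_parent_lt (hT := hT) hv
    let u := hT.parent r v
    Equiv.swap (parentEdgeColor hT r b₀ lab u) (lab u (hT.parent r u)) (lab u v)
termination_by hT.depth r v

/-- Adjacent vertices have different depths, so `b₀` is never the color of an edge. -/
noncomputable def edgeColoring [DecidableEq V] [DecidableEq β] (hT : G.IsTree) (r : V)
    (b₀ : β) (lab : V → V → β) : Sym2 V → β :=
  Sym2.lift ⟨fun a b ↦
    if hT.depth r a < hT.depth r b then hT.parentEdgeColor r b₀ lab b
    else if hT.depth r b < hT.depth r a then hT.parentEdgeColor r b₀ lab a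
    else b₀, fun a b ↦ by
      rcases lt_trichotomy (hT.depth r a) (hT.depth r b) with h | h | h
      · simp [h, h.not_gt]
      · simp [h]
      · simp [h, h.not_gt]⟩

variable [DecidableEq V] [DecidableEq β] {b₀ : β} {lab : V → V → β}

theorem parentEdgeColor_of_ne {v : V} (hv : v ≠ r) :
    hT.parentEdgeColor r b₀ lab v = Equiv.swap (hT.parentEdgeColor r b₀ lab (hT.parent r v))
      (lab (hT.parent r v) (hT.parent r (hT.parent r v))) (lab (hT.parent r v) v) := by
  rw [parentEdgeColor, dif_neg hv]

theorem edgeColoring_parent {v : V} (hv : v ≠ r) :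
    hT.edgeColoring r b₀ lab s(hT.parent r v, v) = hT.parentEdgeColor r b₀ lab v := by
  simp [edgeColoring, depth_parent_lt hv]

theorem edgeColoring_eq_swap {a b : V} (hab : G.Adj a b) :
    hT.edgeColoring r b₀ lab s(a, b) = Equiv.swap (hT.parentEdgeColor r b₀ lab a)
      (lab a (hT.parent r a)) (lab a b) := by
  rcases parent_eq_or_parent_eq_of_adj (hT := hT) (r := r) hab with ⟨ha, rfl⟩ | ⟨hb, rfl⟩
  · rw [Sym2.eq_swap, edgeColoring_parent ha, Equiv.swap_apply_right]
  · rw [edgeColoring_parent hb, parentEdgeColor_of_ne hb]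

variable (hT r b₀) in
theorem isProperEdgeColoring_edgeColoring (hlab : ∀ v, Set.InjOn (lab v) (G.neighborSet v)) :
    G.IsProperEdgeColoring (hT.edgeColoring r b₀ lab) := by
  intro v a b hva hvb hab
  rw [edgeColoring_eq_swap hva, edgeColoring_eq_swap hvb, (Equiv.injective _).ne_iff]
  exact fun h ↦ hab (hlab v hva hvb h)

end IsTree

theorem IsTree.exists_isProperEdgeColoring [Fintype β] [Nonempty β] [G.LocallyFinite]
    (hT : G.IsTree) (hdeg : ∀ v, G.degree v ≤ Fintype.card β) :
    ∃ c : Sym2 V → β, G.IsProperEdgeColoring c := by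
  classical
  choose lab hlab using fun v ↦ exists_injOn_neighborSet v (hdeg v)
  have ⟨r⟩ := hT.connected.nonempty
  exact ⟨_, hT.isProperEdgeColoring_edgeColoring r (Classical.arbitrary β) hlab⟩

end SimpleGraph

/-- For every finite tree `T` with at least two vertices,
`pc(T) = Δ(T)`, the maximum degree of `T`. -/
theorem pc_tree_eq_maxDegree {V : Type*} [Fintype V] (T : SimpleGraph V)
    [DecidableRel T.Adj] (hT : T.IsTree) (hV : 2 ≤ Fintype.card V) :
    pc T = T.maxDegree := by
  have : Nontrivial V := Fintype.one_lt_card_iff_nontrivial.1 hV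
  have hmem : T.maxDegree ∈ {n : ℕ | ∃ c : Sym2 V → Fin n, IsProperConnected T c} := by
    have := Fin.pos_iff_nonempty.1 hT.connected.preconnected.maxDegree_pos
    have ⟨c, hc⟩ := hT.exists_isProperEdgeColoring (β := Fin T.maxDegree)
      (by simpa using T.degree_le_maxDegree)
    exact ⟨c, hc.isProperConnected hT.connected.preconnected⟩
  refine le_antisymm (Nat.sInf_le hmem) (le_csInf ⟨_, hmem⟩ ?_)
  rintro n ⟨c, hc⟩
  exact T.maxDegree_le_of_forall_degree_le n fun v ↦ by
    simpa using (hT.isAcyclic.isProperEdgeColoring_of_isProperConnected hc).degree_le_card v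
end
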